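/- Deterministic single-step bound: let A ∈ ℝ^{m×n}, let A_I be a nonzero row submatrix, α > 0, and β = ‖A_I‖₂²/‖A_I‖_F². For any vectors x, e (with e = x − x*) the update error satisfies ‖e − (α/‖A_I‖_F²)(A_I)ᵀ A_I e‖₂² ≤ ‖e‖₂² − (2α − α²β)‖A_I e‖₂²/‖A_I‖_F². -/

import Mathlib

/-!
Expanding the square gives `‖e - c AᵀA e‖² = ‖e‖² - 2c ‖A e‖² + c² ‖AᵀA e‖²`, because
`⟪e, AᵀA e⟫ = ‖A e‖²`. Since `‖Aᵀ‖₂ = ‖A‖₂`, the last term is at most `c² ‖A‖₂² ‖A e‖²`, and with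
`c = α / ‖A‖_F²` the resulting bound is exactly the claimed right-hand side.
-/

open Matrix

/-- The squared Frobenius norm of a real matrix. -/
noncomputable def frobSq {ι κ : Type*} [Fintype ι] [Fintype κ] (A : Matrix ι κ ℝ) : ℝ :=
  ∑ i, ∑ j, (A i j) ^ 2

/-- The spectral (ℓ₂ operator) norm of a real matrix. -/
noncomputable def specNorm {ι κ : Type*} [Fintype ι] [Fintype κ] [DecidableEq κ]
    (A : Matrix ι κ ℝ) : ℝ :=
  ‖LinearMap.toContinuousLinearMap (Matrix.toEuclideanLin A)‖

/-- The squared Euclidean norm of a vector. -/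
noncomputable def norm2Sq {ι : Type*} [Fintype ι] (v : ι → ℝ) : ℝ := ∑ i, (v i) ^ 2

open scoped Matrix.Norms.L2Operator

section

variable {ι κ : Type*} [Fintype ι] [Fintype κ]

theorem norm2Sq_eq_dotProduct (v : ι → ℝ) : norm2Sq v = v ⬝ᵥ v := by
  simp only [norm2Sq, dotProduct, sq]

theorem norm2Sq_eq_norm_sq (v : ι → ℝ) : norm2Sq v = ‖WithLp.toLp 2 v‖ ^ 2 := by
  rw [EuclideanSpace.real_norm_sq_eq]; rfl

theorem norm2Sq_sub_smul (x y : ι → ℝ) (c : ℝ) :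
    norm2Sq (x - c • y) = norm2Sq x - 2 * c * (x ⬝ᵥ y) + c ^ 2 * norm2Sq y := by
  simp only [norm2Sq_eq_dotProduct, sub_dotProduct, dotProduct_sub, smul_dotProduct,
    dotProduct_smul, dotProduct_comm y x, smul_eq_mul]
  ring

theorem dotProduct_transpose_mul_self_mulVec (A : Matrix ι κ ℝ) (v : κ → ℝ) :
    v ⬝ᵥ (Aᵀ * A) *ᵥ v = norm2Sq (A *ᵥ v) := by
  rw [norm2Sq_eq_dotProduct, ← mulVec_mulVec, dotProduct_mulVec, vecMul_transpose]

variable [DecidableEq κ]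

theorem specNorm_eq_l2_opNorm (A : Matrix ι κ ℝ) : specNorm A = ‖A‖ := rfl

theorem norm2Sq_mulVec_le (A : Matrix ι κ ℝ) (v : κ → ℝ) :
    norm2Sq (A *ᵥ v) ≤ specNorm A ^ 2 * norm2Sq v := by
  rw [norm2Sq_eq_norm_sq, norm2Sq_eq_norm_sq, ← mul_pow, specNorm_eq_l2_opNorm]
  gcongr
  exact l2_opNorm_mulVec A (WithLp.toLp 2 v)

theorem specNorm_transpose [DecidableEq ι] (A : Matrix ι κ ℝ) : specNorm Aᵀ = specNorm A :=
  l2_opNorm_conjTranspose A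

theorem norm2Sq_transpose_mul_self_mulVec_le [DecidableEq ι] (A : Matrix ι κ ℝ) (v : κ → ℝ) :
    norm2Sq ((Aᵀ * A) *ᵥ v) ≤ specNorm A ^ 2 * norm2Sq (A *ᵥ v) := by
  rw [← mulVec_mulVec, ← specNorm_transpose]
  exact norm2Sq_mulVec_le Aᵀ (A *ᵥ v)

end

theorem stmt14_general {p n : ℕ} (AI : Matrix (Fin p) (Fin n) ℝ)
    (α : ℝ) (e : Fin n → ℝ) :
    norm2Sq (e - (α / frobSq AI) • (AIᵀ * AI).mulVec e)
      ≤ norm2Sq e - (2 * α - α ^ 2 * (specNorm AI ^ 2 / frobSq AI)) *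
          norm2Sq (AI.mulVec e) / frobSq AI := by
  rw [norm2Sq_sub_smul, dotProduct_transpose_mul_self_mulVec]
  calc _ ≤ norm2Sq e - 2 * (α / frobSq AI) * norm2Sq (AI *ᵥ e)
        + (α / frobSq AI) ^ 2 * (specNorm AI ^ 2 * norm2Sq (AI *ᵥ e)) := by
        gcongr
        exact norm2Sq_transpose_mul_self_mulVec_le AI e
    _ = _ := by ring

theorem stmt14 {p n : ℕ} (AI : Matrix (Fin p) (Fin n) ℝ) (hAI : AI ≠ 0)
    (α : ℝ) (hα : 0 < α) (e : Fin n → ℝ) :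
    norm2Sq (e - (α / frobSq AI) • (AIᵀ * AI).mulVec e)
      ≤ norm2Sq e - (2 * α - α ^ 2 * (specNorm AI ^ 2 / frobSq AI)) *
          norm2Sq (AI.mulVec e) / frobSq AI :=
  stmt14_general AI α e
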